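/- arXiv:2006.15646 — 2 statements merged into one kernel-verified Lean document; each statement's English description precedes it below -/
import Mathlib

section
/- Let X be a compact space, Y = ℝ^p, G a finite group acting continuously on X and on Y, and F a nonempty subalgebra of C_E(X,Y) of equivariant functions. Suppose the set F_scal = {f ∈ C(X,ℝ) : f·1 ∈ F} satisfies: whenever f(x) = f(x') for all f ∈ F_scal, there exists g ∈ G such that h(g·x) = h(x') for all h ∈ F. Then the uniform closure of F equals {f ∈ C_E(X,Y) : sep(F) ⊆ sep(f) and f(x) ∈ closure(F(x)) for all x ∈ X}. -/
/-!
Call two points of `X` equivalent when no function of the scalar part `S` of `F` separates them.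
The quotient by this relation is compact Hausdorff, so by Stone–Weierstrass the closure of the
algebra generated by `S` contains every continuous function that is constant on the classes, in
particular partitions of unity subordinate to open covers of the quotient. As `F` is a module over
that algebra, a function lies in the closure of `F` as soon as it can be approximated by elements
of `F` on each class separately. If `y` is equivalent to `x`, the hypothesis on `S` gives `g` with
`h y = g • h x` for all `h ∈ F`, hence also `f y = g • f x` by separation; since `G` is finite,
choosing `h x` close enough to `f x` makes all the translates `g • h x` close to `g • f x` at once.
-/

open Set Filter Topology

namespace ContinuousMap

variable {X E : Type*} [TopologicalSpace X]

instance [CompactSpace X] {𝕜 : Type*} [NormedRing 𝕜] [SeminormedAddCommGroup E] [Module 𝕜 E]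
    [IsBoundedSMul 𝕜 E] : IsBoundedSMul C(X, 𝕜) C(X, E) :=
  IsBoundedSMul.of_norm_smul_le fun ψ k => (norm_le _ (by positivity)).2 fun x =>
    (norm_smul_le _ _).trans <|
      mul_le_mul (ψ.norm_coe_le_norm x) (k.norm_coe_le_norm x) (norm_nonneg _) (norm_nonneg _)

def fiberSetoid (S : Set C(X, ℝ)) : Setoid X where
  r x y := ∀ φ ∈ S, φ x = φ y
  iseqv := ⟨fun _ _ _ => rfl, fun h φ hφ => (h φ hφ).symm,
    fun h₁ h₂ φ hφ => (h₁ φ hφ).trans (h₂ φ hφ)⟩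

variable {S : Set C(X, ℝ)}

def fiberMk (S : Set C(X, ℝ)) : C(X, Quotient (fiberSetoid S)) :=
  ⟨Quotient.mk _, continuous_quotient_mk'⟩

def fiberLift {φ : C(X, ℝ)} (hφ : φ ∈ S) : C(Quotient (fiberSetoid S), ℝ) :=
  ⟨Quotient.lift φ fun _ _ h => h φ hφ, φ.continuous.quotient_lift _⟩

theorem exists_fiberLift_ne {a b : Quotient (fiberSetoid S)} (hab : a ≠ b) :
    ∃ φ, ∃ hφ : φ ∈ S, fiberLift hφ a ≠ fiberLift hφ b := by
  induction a using Quotient.inductionOn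
  induction b using Quotient.inductionOn
  by_contra! h
  exact hab (Quotient.sound h)

instance : T2Space (Quotient (fiberSetoid S)) where
  t2 _ _ hab :=
    let ⟨_, _, hne⟩ := exists_fiberLift_ne hab
    separated_by_continuous (map_continuous _) hne

theorem comp_fiberMk_mem_topologicalClosure_adjoin [CompactSpace X]
    (ψ : C(Quotient (fiberSetoid S), ℝ)) :
    ψ.comp (fiberMk S) ∈ (Algebra.adjoin ℝ S).topologicalClosure := by
  let A := (Algebra.adjoin ℝ S).comap (compRightAlgHom ℝ ℝ (fiberMk S))
  have hA : A.SeparatesPoints := fun a b hab => by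
    obtain ⟨φ, hφ, hne⟩ := exists_fiberLift_ne hab
    exact ⟨_, ⟨fiberLift hφ, Algebra.subset_adjoin hφ, rfl⟩, hne⟩
  have hψ : ψ ∈ A.topologicalClosure := by
    rw [subalgebra_topologicalClosure_eq_top_of_separatesPoints A hA]
    trivial
  exact map_mem_closure (f := fun g => g.comp (fiberMk S)) (continuous_precomp _) hψ
    (t := Algebra.adjoin ℝ S) fun _ ha => ha

variable [NormedAddCommGroup E] [NormedSpace ℝ E]

theorem smul_mem_topologicalClosure [CompactSpace X] {M : Submodule ℝ C(X, E)}
    (hSM : ∀ φ ∈ S, ∀ k ∈ M, φ • k ∈ M) {ψ : C(X, ℝ)}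
    (hψ : ψ ∈ (Algebra.adjoin ℝ S).topologicalClosure) {k : C(X, E)}
    (hk : k ∈ M.topologicalClosure) : ψ • k ∈ M.topologicalClosure := by
  have hadjoin : ∀ ψ ∈ Algebra.adjoin ℝ S, ∀ k ∈ M, ψ • k ∈ M := by
    intro ψ hψ
    induction hψ using Algebra.adjoin_induction with
    | mem φ hφ => exact hSM φ hφ
    | algebraMap c => intro k hk; rw [algebraMap_smul]; exact M.smul_mem c hk
    | add a b _ _ ha hb => intro k hk; rw [add_smul]; exact M.add_mem (ha k hk) (hb k hk)
    | mul a b _ _ ha hb => intro k hk; rw [mul_smul]; exact ha _ (hb k hk)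
  exact map_mem_closure₂ continuous_smul hψ hk hadjoin

theorem mem_topologicalClosure_of_forall_fiber [CompactSpace X] (M : Submodule ℝ C(X, E))
    (hSM : ∀ φ ∈ S, ∀ k ∈ M, φ • k ∈ M) {f : C(X, E)}
    (hf : ∀ x, ∀ ε > 0, ∃ k ∈ M, ∀ y, fiberSetoid S x y → dist (k y) (f y) < ε) :
    f ∈ M.topologicalClosure := by
  rw [← SetLike.mem_coe, ← M.isClosed_topologicalClosure.closure_eq]
  refine Metric.mem_closure_iff.2 fun ε hε => ?_
  choose k hkM hk using fun x => hf x ε hε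
  let π := fiberMk S
  -- the classes on which `k x` is `ε`-close to `f`
  let V : X → Set (Quotient (fiberSetoid S)) := fun x => (π '' {y | ε ≤ dist (k x y) (f y)})ᶜ
  have hV_open : ∀ x, IsOpen (V x) := fun x =>
    ((isClosed_le continuous_const (by fun_prop)).isCompact.image
      π.continuous).isClosed.isOpen_compl
  have hV : ∀ x y, π y ∈ V x → dist (k x y) (f y) < ε := fun x y hy =>
    not_le.1 fun h => hy ⟨y, h, rfl⟩
  have hV_cover : univ ⊆ ⋃ x, V x := fun c _ => Quotient.inductionOn c fun x =>
    mem_iUnion.2 ⟨x, by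
      rintro ⟨y, hy, hyx⟩
      exact hy.not_gt (hk x y (Quotient.exact hyx.symm))⟩
  obtain ⟨t, ht⟩ := isCompact_univ.elim_finite_subcover V hV_open hV_cover
  obtain ⟨ρ, hρ⟩ := PartitionOfUnity.exists_isSubordinate isClosed_univ (fun i : t => V i)
    (fun i => hV_open i) (by simpa [iUnion_subtype] using ht)
  refine ⟨∑ i : t, (ρ i).comp π • k i, ?_, ?_⟩
  · exact M.topologicalClosure.sum_mem fun i _ =>
      smul_mem_topologicalClosure hSM (comp_fiberMk_mem_topologicalClosure_adjoin _)
        (M.le_topologicalClosure (hkM i))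
  · rw [dist_comm, dist_lt_iff hε]
    intro y
    have := (convex_ball (f y) ε).finsum_mem (fun i => ρ.nonneg i (π y))
      (ρ.sum_eq_one (mem_univ _)) fun i hi =>
        Metric.mem_ball.2 (hV i y (hρ i (subset_tsupport _ hi)))
    simpa [finsum_eq_sum_of_fintype] using this

theorem smul_eq_mul_of_forall_eq_const {ι : Type*} {φ : C(X, ℝ)} {kφ : C(X, ι → ℝ)}
    (hφ : ∀ z, kφ z = fun _ => φ z) (k : C(X, ι → ℝ)) : φ • k = kφ * k := by
  ext z i
  simp [hφ z]

variable {Y : Type*} [TopologicalSpace Y]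

theorem isClosed_setOf_equivariant {G : Type*} [SMul G X] [SMul G Y] [ContinuousConstSMul G Y]
    [T2Space Y] : IsClosed {f : C(X, Y) | ∀ g : G, ∀ x, f (g • x) = g • f x} := by
  simp only [ofPred_forall]
  exact isClosed_iInter fun g => isClosed_iInter fun x =>
    isClosed_eq (continuous_eval_const _)
      ((continuous_const_smul g).comp (continuous_eval_const x))

theorem isClosed_setOf_map_eq_of_rel [T2Space Y] (r : X → X → Prop) :
    IsClosed {f : C(X, Y) | ∀ x x', r x x' → f x = f x'} := by
  simp only [ofPred_forall]
  exact isClosed_iInter fun x => isClosed_iInter fun x' => isClosed_iInter fun _ =>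
    isClosed_eq (continuous_eval_const x) (continuous_eval_const x')

theorem isClosed_setOf_forall_mem {T : X → Set Y} (hT : ∀ x, IsClosed (T x)) :
    IsClosed {f : C(X, Y) | ∀ x, f x ∈ T x} := by
  simp only [ofPred_forall]
  exact isClosed_iInter fun x => (hT x).preimage (continuous_eval_const x)

end ContinuousMap

open ContinuousMap

theorem eventually_forall_dist_smul_lt {G Y : Type*} [Finite G] [SMul G Y] [PseudoMetricSpace Y]
    [ContinuousConstSMul G Y] (v : Y) {ε : ℝ} (hε : 0 < ε) :
    ∀ᶠ w in 𝓝 v, ∀ g : G, dist (g • w) (g • v) < ε :=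
  eventually_all.2 fun g =>
    (continuous_const_smul g).continuousAt.eventually (Metric.ball_mem_nhds _ hε)

theorem stmt10_general {X G : Type*} [TopologicalSpace X] [CompactSpace X] [Group G] [Finite G]
    [MulAction G X] {p : ℕ}
    [MulAction G (Fin p → ℝ)] [ContinuousConstSMul G (Fin p → ℝ)]
    (F : Set C(X, Fin p → ℝ)) (hne : F.Nonempty)
    (hadd : ∀ f ∈ F, ∀ g ∈ F, f + g ∈ F)
    (hsmul : ∀ c : ℝ, ∀ f ∈ F, c • f ∈ F)
    (hmul : ∀ f ∈ F, ∀ g ∈ F, f * g ∈ F)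
    (hequiv : ∀ f ∈ F, ∀ g : G, ∀ x : X, f (g • x) = g • f x)
    (hscal : ∀ x x' : X,
      (∀ f : C(X, ℝ), (∃ k ∈ F, ∀ z : X, k z = fun _ => f z) → f x = f x') →
      ∃ g : G, ∀ h ∈ F, h (g • x) = h x') :
    closure F = {f : C(X, Fin p → ℝ) |
        (∀ g : G, ∀ x : X, f (g • x) = g • f x) ∧
        (∀ x x' : X, (∀ h ∈ F, h x = h x') → f x = f x') ∧
        (∀ x : X, f x ∈ closure {y : Fin p → ℝ | ∃ h ∈ F, h x = y})} := by
  refine subset_antisymm (closure_minimal (fun k hk => ?_) ?_) ?_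
  · exact ⟨hequiv k hk, fun x x' h => h k hk, fun x => subset_closure ⟨k, hk, rfl⟩⟩
  · exact isClosed_setOf_equivariant.inter ((isClosed_setOf_map_eq_of_rel _).inter
      (isClosed_setOf_forall_mem fun _ => isClosed_closure))
  rintro f ⟨hf_equiv, hf_sep, hf_mem⟩
  let M : Submodule ℝ C(X, Fin p → ℝ) :=
    { carrier := F
      add_mem' := fun ha hb => hadd _ ha _ hb
      zero_mem' := hne.elim fun k hk => by simpa using hsmul 0 k hk
      smul_mem' := hsmul }
  let S : Set C(X, ℝ) := {φ | ∃ k ∈ F, ∀ z, k z = fun _ => φ z}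
  have hSM : ∀ φ ∈ S, ∀ k ∈ M, φ • k ∈ M := fun φ ⟨kφ, hkφ, hφ⟩ k hk =>
    smul_eq_mul_of_forall_eq_const hφ k ▸ hmul kφ hkφ k hk
  refine mem_topologicalClosure_of_forall_fiber M hSM fun x ε hε => ?_
  obtain ⟨_, hclose, h, hh, rfl⟩ :=
    mem_closure_iff_nhds.1 (hf_mem x) _ (eventually_forall_dist_smul_lt (G := G) (f x) hε)
  refine ⟨h, hh, fun y hxy => ?_⟩
  obtain ⟨g, hg⟩ := hscal x y hxy
  rw [← hg h hh, ← hf_sep _ _ hg, hequiv h hh, hf_equiv]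
  exact hclose g

/-- Preliminary version of the equivariant Stone-Weierstrass theorem. -/
theorem stmt10 {X G : Type*} [TopologicalSpace X] [CompactSpace X] [Group G] [Finite G]
    [MulAction G X] [ContinuousConstSMul G X] {p : ℕ}
    [MulAction G (Fin p → ℝ)] [ContinuousConstSMul G (Fin p → ℝ)]
    (F : Set C(X, Fin p → ℝ)) (hne : F.Nonempty)
    (hadd : ∀ f ∈ F, ∀ g ∈ F, f + g ∈ F)
    (hsmul : ∀ c : ℝ, ∀ f ∈ F, c • f ∈ F)
    (hmul : ∀ f ∈ F, ∀ g ∈ F, f * g ∈ F)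
    (hequiv : ∀ f ∈ F, ∀ g : G, ∀ x : X, f (g • x) = g • f x)
    (hscal : ∀ x x' : X,
      (∀ f : C(X, ℝ), (∃ k ∈ F, ∀ z : X, k z = fun _ => f z) → f x = f x') →
      ∃ g : G, ∀ h ∈ F, h (g • x) = h x') :
    closure F = {f : C(X, Fin p → ℝ) |
        (∀ g : G, ∀ x : X, f (g • x) = g • f x) ∧
        (∀ x x' : X, (∀ h ∈ F, h x = h x') → f x = f x') ∧
        (∀ x : X, f x ∈ closure {y : Fin p → ℝ | ∃ h ∈ F, h x = y})} :=
  stmt10_general F hne hadd hsmul hmul hequiv hscal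
end

section
/- Let X be a compact space and F ⊆ C(X,ℝ) a subalgebra containing the constant function 1. Let X_F = X/sep(F) be the quotient of X by the equivalence relation sep(F), with quotient map π_F. Then X_F is compact, every f ∈ F factors uniquely as f = f̂ ∘ π_F with f̂ continuous on X_F, the set F̂ = {f̂ : f ∈ F} separates points of X_F, and F̂ is dense in C(X_F, ℝ). -/
/-!
Every `f ∈ F` is constant on the classes of `sep(F)`, so it descends to a continuous function on
`X_F`, uniquely since `π_F` is surjective. The descended functions are exactly the continuous
functions on `X_F` whose pullback lies in `F`, hence a subalgebra; it separates points by the very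
definition of `sep(F)`, and `X_F` is compact as a continuous image of `X`, so Stone–Weierstrass
makes it dense.
-/

namespace ContinuousMap

variable {X Y : Type*} [TopologicalSpace X] [TopologicalSpace Y]

def quotientMk (s : Setoid X) : C(X, Quotient s) := ⟨Quotient.mk s, continuous_quotient_mk'⟩

variable {s : Setoid X}

theorem ext_quotient {k k' : C(Quotient s, Y)}
    (h : ∀ x, k (Quotient.mk s x) = k' (Quotient.mk s x)) : k = k' :=
  ext (Quotient.ind h)

theorem existsUnique_comp_quotientMk_eq (f : C(X, Y)) (hf : ∀ x x', s.r x x' → f x = f x') :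
    ∃! k : C(Quotient s, Y), ∀ x, k (Quotient.mk s x) = f x :=
  ⟨⟨Quotient.lift f hf, f.continuous.quotient_lift hf⟩, fun _ => rfl,
    fun _ hk => ext_quotient hk⟩

end ContinuousMap

namespace Subalgebra

open ContinuousMap

variable {R A X : Type*} [CommSemiring R] [Semiring A] [Algebra R A] [TopologicalSpace A]
  [IsTopologicalSemiring A] [TopologicalSpace X]

/-- The algebra `F̂` of the paper. -/
def descend (F : Subalgebra R C(X, A)) (s : Setoid X) : Subalgebra R C(Quotient s, A) :=
  F.comap (compRightAlgHom R A (quotientMk s))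

variable {F : Subalgebra R C(X, A)} {s : Setoid X}

theorem mem_descend_iff {k : C(Quotient s, A)} :
    k ∈ F.descend s ↔ ∃ f ∈ F, ∀ x, k (Quotient.mk s x) = f x :=
  ⟨fun hk => ⟨_, hk, fun _ => rfl⟩, fun ⟨f, hf, hk⟩ => by
    rwa [descend, mem_comap, show compRightAlgHom R A (quotientMk s) k = f from ContinuousMap.ext hk]⟩

theorem descend_separatesPoints (hs : ∀ x x', s.r x x' ↔ ∀ f ∈ F, f x = f x') :
    (F.descend s).SeparatesPoints := by
  rintro ⟨x⟩ ⟨x'⟩ hne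
  obtain ⟨f, hf, hfx⟩ : ∃ f ∈ F, f x ≠ f x' := by
    simpa [hs] using mt Quotient.sound hne
  obtain ⟨k, hk, -⟩ := existsUnique_comp_quotientMk_eq f fun y y' h => (hs y y').1 h f hf
  rw [← hk, ← hk] at hfx
  exact ⟨k, ⟨k, mem_descend_iff.2 ⟨f, hf, hk⟩, rfl⟩, hfx⟩

theorem dense_descend [CompactSpace X] {F : Subalgebra ℝ C(X, ℝ)}
    (hs : ∀ x x', s.r x x' ↔ ∀ f ∈ F, f x = f x') : Dense (F.descend s : Set C(Quotient s, ℝ)) :=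
  fun k => topologicalClosure_coe (F.descend s) ▸
    continuousMap_mem_subalgebra_closure_of_separatesPoints _ (descend_separatesPoints hs) k

end Subalgebra

open Subalgebra in
/-- Factorization through the quotient by the separating-power equivalence relation:
the quotient is compact, every member of the algebra factors uniquely and continuously,
the factored family separates points, and it is dense. -/
theorem stmt17 {X : Type*} [TopologicalSpace X] [CompactSpace X]
    (F : Subalgebra ℝ C(X, ℝ)) (s : Setoid X)
    (hs : ∀ x x' : X, s.r x x' ↔ ∀ f ∈ F, f x = f x') :
    CompactSpace (Quotient s) ∧
    (∀ f ∈ F, ∃! fhat : C(Quotient s, ℝ), ∀ x : X, fhat (Quotient.mk s x) = f x) ∧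
    (∀ a b : Quotient s, a ≠ b →
      ∃ k : C(Quotient s, ℝ), (∃ f ∈ F, ∀ x : X, k (Quotient.mk s x) = f x) ∧ k a ≠ k b) ∧
    Dense {k : C(Quotient s, ℝ) | ∃ f ∈ F, ∀ x : X, k (Quotient.mk s x) = f x} := by
  have hdescend : {k : C(Quotient s, ℝ) | ∃ f ∈ F, ∀ x : X, k (Quotient.mk s x) = f x} =
      F.descend s :=
    Set.ext fun _ => mem_descend_iff.symm
  refine ⟨inferInstance, fun f hf => ?_, fun a b hab => ?_, hdescend ▸ dense_descend hs⟩
  · exact ContinuousMap.existsUnique_comp_quotientMk_eq f fun x x' h => (hs x x').1 h f hf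
  · obtain ⟨_, ⟨k, hk, rfl⟩, hkab⟩ := descend_separatesPoints hs hab
    exact ⟨k, mem_descend_iff.1 hk, hkab⟩
end
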